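/- arXiv:2506.16640 — 2 statements merged into one kernel-verified Lean document; each statement's English description precedes it below -/
import Mathlib

section
/- Let α > 1, z ∈ ℝⁿ, and N > n. Then any vector z* ∈ ℝ^N with z*_i = z_i for all i ≤ n and z*_i ≤ τ(z)/(α−1) for all i > n satisfies τ(z*) = τ(z), α-entmax(z*)_i = α-entmax(z)_i for all i ≤ n, and α-entmax(z*)_i = 0 for all i > n. In particular, for every z and every N > n there exists an extension z* of z whose α-entmax distribution assigns the same probabilities to the first n tokens as α-entmax(z). -/
/-!
Entries at or below `τ / (α - 1)` contribute nothing at threshold `τ`, so `τ` still normalizes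
the extended vector. The normalizing threshold is unique: as a function of the threshold, the
total mass is antitone, and strictly decreasing wherever it is positive, since some term is then
positive and every positive term strictly decreases.
-/

/-- The coordinate value of `α`-entmax with threshold `τ` at a logit `x`. -/
noncomputable def entmaxTerm (α τ x : ℝ) : ℝ :=
  (max ((α - 1) * x - τ) 0) ^ ((1 : ℝ) / (α - 1))

open Finset

theorem Fin.sum_castLE_eq_sum_of_eq_zero {M : Type*} [AddCommMonoid M] {n N : ℕ} (h : n ≤ N)
    (f : Fin N → M) (hf : ∀ i : Fin N, n ≤ (i : ℕ) → f i = 0) :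
    ∑ i : Fin n, f (Fin.castLE h i) = ∑ i, f i := by
  refine (sum_map univ (Fin.castLEEmb h) f).symm.trans <|
    sum_subset (subset_univ _) fun i _ hi => hf i (not_lt.1 fun hin => hi ?_)
  exact mem_map.2 ⟨⟨i, hin⟩, mem_univ _, rfl⟩

section entmaxTerm

variable {α : ℝ}

theorem entmaxTerm_eq_zero_of_le (hα : 1 < α) {τ x : ℝ} (hx : x ≤ τ / (α - 1)) :
    entmaxTerm α τ x = 0 := by
  have hα' : 0 < α - 1 := sub_pos.2 hα
  rw [entmaxTerm, max_eq_right (by rw [le_div_iff₀ hα'] at hx; linarith),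
    Real.zero_rpow (one_div_pos.2 hα').ne']

theorem entmaxTerm_antitone (hα : 1 < α) (x : ℝ) : Antitone fun τ => entmaxTerm α τ x :=
  fun _ _ h =>
    Real.rpow_le_rpow (le_max_right _ _) (max_le_max (by linarith) le_rfl)
      (one_div_pos.2 (sub_pos.2 hα)).le

theorem entmaxTerm_lt_of_lt (hα : 1 < α) {τ₁ τ₂ x : ℝ} (h : τ₁ < τ₂)
    (hpos : 0 < entmaxTerm α τ₂ x) :
    entmaxTerm α τ₂ x < entmaxTerm α τ₁ x := by
  have hα' : 0 < α - 1 := sub_pos.2 hα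
  have hx : τ₂ < (α - 1) * x := by
    by_contra! hx
    exact hpos.ne' (entmaxTerm_eq_zero_of_le hα (by rw [le_div_iff₀ hα']; linarith))
  rw [entmaxTerm, entmaxTerm, max_eq_left (by linarith), max_eq_left (by linarith)]
  exact Real.rpow_lt_rpow (by linarith) (by linarith) (one_div_pos.2 hα')

variable {ι : Type*} [Fintype ι]

theorem sum_entmaxTerm_lt_of_lt (hα : 1 < α) (w : ι → ℝ) {τ₁ τ₂ : ℝ} (h : τ₁ < τ₂)
    (hpos : 0 < ∑ i, entmaxTerm α τ₂ (w i)) :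
    ∑ i, entmaxTerm α τ₂ (w i) < ∑ i, entmaxTerm α τ₁ (w i) := by
  obtain ⟨j, -, hj⟩ :=
    exists_lt_of_sum_lt (s := univ) (f := fun _ => (0 : ℝ)) (by simpa using hpos)
  exact sum_lt_sum (fun i _ => entmaxTerm_antitone hα _ h.le)
    ⟨j, mem_univ _, entmaxTerm_lt_of_lt hα h hj⟩

theorem entmaxThreshold_unique (hα : 1 < α) (w : ι → ℝ) {τ₁ τ₂ : ℝ}
    (h₁ : ∑ i, entmaxTerm α τ₁ (w i) = 1) (h₂ : ∑ i, entmaxTerm α τ₂ (w i) = 1) : τ₁ = τ₂ := by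
  refine le_antisymm (not_lt.1 fun h => ?_) (not_lt.1 fun h => ?_)
  · simpa [h₁, h₂] using sum_entmaxTerm_lt_of_lt hα w h (by rw [h₁]; exact one_pos)
  · simpa [h₁, h₂] using sum_entmaxTerm_lt_of_lt hα w h (by rw [h₂]; exact one_pos)

theorem sum_entmaxTerm_of_extension (hα : 1 < α) {n N : ℕ} (h : n ≤ N) {z : Fin n → ℝ}
    {zstar : Fin N → ℝ} {τ : ℝ} (hext : ∀ i : Fin n, zstar (Fin.castLE h i) = z i)
    (hlow : ∀ i : Fin N, n ≤ (i : ℕ) → zstar i ≤ τ / (α - 1)) :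
    ∑ i, entmaxTerm α τ (zstar i) = ∑ i, entmaxTerm α τ (z i) := by
  rw [← Fin.sum_castLE_eq_sum_of_eq_zero h _ fun i hi =>
    entmaxTerm_eq_zero_of_le hα (hlow i hi)]
  simp only [hext]

end entmaxTerm

theorem entmax_retains_probability_under_extension_general
    (α : ℝ) (hα : 1 < α) (n N : ℕ) (hnN : n < N)
    (z : Fin n → ℝ) (τ : ℝ)
    (hτ : ∑ i, entmaxTerm α τ (z i) = 1) :
    (∀ zstar : Fin N → ℝ,
      (∀ i : Fin n, zstar (Fin.castLE hnN.le i) = z i) →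
      (∀ i : Fin N, n ≤ (i : ℕ) → zstar i ≤ τ / (α - 1)) →
      ∀ τs : ℝ, (∑ i, entmaxTerm α τs (zstar i) = 1) →
        τs = τ ∧
        (∀ i : Fin n,
          entmaxTerm α τs (zstar (Fin.castLE hnN.le i)) = entmaxTerm α τ (z i)) ∧
        (∀ i : Fin N, n ≤ (i : ℕ) → entmaxTerm α τs (zstar i) = 0)) ∧
    (∃ zstar : Fin N → ℝ,
      (∀ i : Fin n, zstar (Fin.castLE hnN.le i) = z i) ∧
      ∃ τs : ℝ, (∑ i, entmaxTerm α τs (zstar i) = 1) ∧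
        ∀ i : Fin n,
          entmaxTerm α τs (zstar (Fin.castLE hnN.le i)) = entmaxTerm α τ (z i)) := by
  have hsum : ∀ zstar : Fin N → ℝ, (∀ i : Fin n, zstar (Fin.castLE hnN.le i) = z i) →
      (∀ i : Fin N, n ≤ (i : ℕ) → zstar i ≤ τ / (α - 1)) →
      ∑ i, entmaxTerm α τ (zstar i) = 1 := fun _ hext hlow =>
    (sum_entmaxTerm_of_extension hα hnN.le hext hlow).trans hτ
  refine ⟨fun zstar hext hlow τs hτs => ?_, ?_⟩
  · obtain rfl := entmaxThreshold_unique hα zstar hτs (hsum zstar hext hlow)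
    exact ⟨rfl, fun i => by rw [hext i], fun i hi => entmaxTerm_eq_zero_of_le hα (hlow i hi)⟩
  · let zstar : Fin N → ℝ := fun i => if h : (i : ℕ) < n then z ⟨i, h⟩ else τ / (α - 1)
    have hext : ∀ i : Fin n, zstar (Fin.castLE hnN.le i) = z i := fun i => by simp [zstar]
    have hlow : ∀ i : Fin N, n ≤ (i : ℕ) → zstar i ≤ τ / (α - 1) := fun i hi => by
      simp [zstar, not_lt.2 hi]
    exact ⟨zstar, hext, τ, hsum zstar hext hlow, fun i => by rw [hext i]⟩

/-- Any extension `z* : ℝ^N` of `z : ℝⁿ` (`N > n`) whose new entries all lie at or below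
`τ(z)/(α−1)` has the same threshold, assigns the same probabilities to the first `n`
tokens, and assigns exactly zero probability to all new tokens. In particular, for every
`z` and `N > n` there exists such an extension whose `α`-entmax distribution agrees with
`α-entmax(z)` on the first `n` tokens. Thresholds are characterized by normalization. -/
theorem entmax_retains_probability_under_extension
    (α : ℝ) (hα : 1 < α) (n N : ℕ) (hn : 1 ≤ n) (hnN : n < N)
    (z : Fin n → ℝ) (τ : ℝ)
    (hτ : ∑ i, entmaxTerm α τ (z i) = 1) :
    (∀ zstar : Fin N → ℝ,
      (∀ i : Fin n, zstar (Fin.castLE hnN.le i) = z i) →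
      (∀ i : Fin N, n ≤ (i : ℕ) → zstar i ≤ τ / (α - 1)) →
      ∀ τs : ℝ, (∑ i, entmaxTerm α τs (zstar i) = 1) →
        τs = τ ∧
        (∀ i : Fin n,
          entmaxTerm α τs (zstar (Fin.castLE hnN.le i)) = entmaxTerm α τ (z i)) ∧
        (∀ i : Fin N, n ≤ (i : ℕ) → entmaxTerm α τs (zstar i) = 0)) ∧
    (∃ zstar : Fin N → ℝ,
      (∀ i : Fin n, zstar (Fin.castLE hnN.le i) = z i) ∧
      ∃ τs : ℝ, (∑ i, entmaxTerm α τs (zstar i) = 1) ∧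
        ∀ i : Fin n,
          entmaxTerm α τs (zstar (Fin.castLE hnN.le i)) = entmaxTerm α τ (z i)) :=
  entmax_retains_probability_under_extension_general α hα n N hnN z τ hτ
end

section
/- Let α > 1 and reals b < φ with 0 < φ − b < 1/(α−1). For each n ≥ 2, let z^{(n)} ∈ ℝⁿ have n−1 coordinates equal to b and one coordinate equal to φ, and let p_n denote the α-entmax probability of the coordinate with value φ. Then every coordinate of α-entmax(z^{(n)}) is strictly positive, p_n satisfies the equation p_n^{α−1} − ((1 − p_n)/(n − 1))^{α−1} = (α−1)(φ − b), and lim_{n→∞} p_n = ((α−1)(φ − b))^{1/(α−1)} < 1. -/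
open Filter Topology Finset

theorem sum_comp_eq_add_card_sub_one_nsmul {ι R M : Type*} [Fintype ι] [DecidableEq R]
    [AddCommMonoid M] {z : ι → R} {a b : R} (f : R → M)
    (hcard : #(univ.filter (z · = a)) = 1) (hvals : ∀ i, z i = a ∨ z i = b) :
    ∑ i, f (z i) = f a + (Fintype.card ι - 1) • f b := by
  have hrest : #(univ.filter (¬ z · = a)) = Fintype.card ι - 1 := by
    have := card_filter_add_card_filter_not (s := univ) (z · = a)
    rw [card_univ] at this
    omega
  rw [← sum_filter_add_sum_filter_not univ (z · = a),
    sum_congr rfl fun i hi => congrArg f (mem_filter.1 hi).2,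
    sum_congr rfl fun i hi => congrArg f ((hvals i).resolve_left (mem_filter.1 hi).2),
    sum_const, sum_const, hcard, hrest, one_nsmul]

section entmaxTerm

variable {α τ x : ℝ}

theorem entmaxTerm_nonneg : 0 ≤ entmaxTerm α τ x :=
  Real.rpow_nonneg (le_max_right _ _) _

theorem entmaxTerm_pos_iff (hα : 1 < α) : 0 < entmaxTerm α τ x ↔ τ < (α - 1) * x := by
  refine ⟨fun h => ?_, fun h => Real.rpow_pos_of_pos (lt_max_of_lt_left (by linarith)) _⟩
  by_contra! hle
  rw [entmaxTerm, max_eq_right (by linarith), Real.zero_rpow (one_div_pos.2 (sub_pos.2 hα)).ne']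
    at h
  exact h.false

theorem entmaxTerm_rpow_of_lt (hα : 1 < α) (h : τ < (α - 1) * x) :
    entmaxTerm α τ x ^ (α - 1) = (α - 1) * x - τ := by
  rw [entmaxTerm, max_eq_left (by linarith), ← Real.rpow_mul (by linarith),
    one_div_mul_cancel (by linarith), Real.rpow_one]

theorem entmaxTerm_lt_one (hα : 1 < α) (h : (α - 1) * x - τ < 1) : entmaxTerm α τ x < 1 :=
  Real.rpow_lt_one (le_max_right _ _) (max_lt h one_pos) (one_div_pos.2 (sub_pos.2 hα))

theorem continuous_entmaxTerm_threshold (hα : 1 < α) (x : ℝ) :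
    Continuous fun τ => entmaxTerm α τ x :=
  (Real.continuous_rpow_const (one_div_pos.2 (sub_pos.2 hα)).le).comp
    ((continuous_const.sub continuous_id).max continuous_const)

end entmaxTerm

theorem lt_of_entmaxTerm_add_mul_eq_one {α τ b φ m : ℝ} (hα : 1 < α)
    (hgap : (α - 1) * (φ - b) < 1)
    (hsum : entmaxTerm α τ φ + m * entmaxTerm α τ b = 1) : τ < (α - 1) * b := by
  by_contra! h
  have hq : entmaxTerm α τ b = 0 :=
    entmaxTerm_nonneg.antisymm' (not_lt.1 fun hq => h.not_gt ((entmaxTerm_pos_iff hα).1 hq))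
  have hp : entmaxTerm α τ φ < 1 := entmaxTerm_lt_one hα (by linarith)
  rw [hq, mul_zero, add_zero] at hsum
  exact hp.ne hsum

theorem tendsto_threshold_of_entmaxTerm_add_mul_eq_one {α b φ : ℝ} {τ : ℕ → ℝ} (hα : 1 < α)
    (hgap : (α - 1) * (φ - b) < 1)
    (hsum : ∀ n, 2 ≤ n → entmaxTerm α (τ n) φ + ((n : ℝ) - 1) * entmaxTerm α (τ n) b = 1) :
    Tendsto τ atTop (𝓝 ((α - 1) * b)) := by
  have hq : Tendsto (fun n => entmaxTerm α (τ n) b) atTop (𝓝 0) := by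
    refine squeeze_zero' (.of_forall fun _ => entmaxTerm_nonneg) ?_
      (tendsto_atTop_add_const_right _ (-1) tendsto_natCast_atTop_atTop).inv_tendsto_atTop
    filter_upwards [eventually_ge_atTop 2] with n hn
    have hn' : (0 : ℝ) < n + -1 := by
      have : (2 : ℝ) ≤ n := by exact_mod_cast hn
      linarith
    rw [Pi.inv_apply, ← one_div, le_div_iff₀ hn']
    linarith [hsum n hn, entmaxTerm_nonneg (α := α) (τ := τ n) (x := φ)]
  have hqs := hq.rpow_const (Or.inr (sub_pos.2 hα).le)
  rw [Real.zero_rpow (sub_pos.2 hα).ne'] at hqs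
  have hlim := (tendsto_const_nhds (x := (α - 1) * b)).sub hqs
  rw [sub_zero] at hlim
  refine hlim.congr' ?_
  filter_upwards [eventually_ge_atTop 2] with n hn
  rw [entmaxTerm_rpow_of_lt hα (lt_of_entmaxTerm_add_mul_eq_one hα hgap (hsum n hn))]
  ring

open scoped Classical in
/-- Dense two-level regime with a single high logit: with `n−1` coordinates equal to `b`
and one equal to `φ`, where `0 < φ − b < 1/(α−1)`, every coordinate of `α-entmax(z^{(n)})`
is strictly positive; the probability `p_n` of the `φ`-coordinate satisfies
`p_n^{α−1} − ((1−p_n)/(n−1))^{α−1} = (α−1)(φ−b)`; and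
`p_n → ((α−1)(φ−b))^{1/(α−1)} < 1` as `n → ∞`. -/
theorem entmax_single_high_logit_limit
    (α b φ : ℝ) (hα : 1 < α) (hbφ : b < φ) (hgap : φ - b < 1 / (α - 1))
    (z : (n : ℕ) → Fin n → ℝ) (τ : ℕ → ℝ)
    (hcard : ∀ n, 2 ≤ n → (Finset.univ.filter (fun i : Fin n => z n i = φ)).card = 1)
    (hvals : ∀ n, 2 ≤ n → ∀ i, z n i = φ ∨ z n i = b)
    (hτ : ∀ n, 2 ≤ n → ∑ i, entmaxTerm α (τ n) (z n i) = 1) :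
    (∀ n, 2 ≤ n → ∀ i : Fin n, 0 < entmaxTerm α (τ n) (z n i)) ∧
    (∀ n, 2 ≤ n →
      (entmaxTerm α (τ n) φ) ^ (α - 1) -
          ((1 - entmaxTerm α (τ n) φ) / ((n : ℝ) - 1)) ^ (α - 1) =
        (α - 1) * (φ - b)) ∧
    Filter.Tendsto (fun n : ℕ => entmaxTerm α (τ n) φ) Filter.atTop
      (nhds (((α - 1) * (φ - b)) ^ ((1 : ℝ) / (α - 1)))) ∧
    ((α - 1) * (φ - b)) ^ ((1 : ℝ) / (α - 1)) < 1 := by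
  have hs : 0 < α - 1 := by linarith
  have hL : 0 < (α - 1) * (φ - b) := mul_pos hs (sub_pos.2 hbφ)
  have hgap' : (α - 1) * (φ - b) < 1 := by rwa [lt_div_iff₀ hs, mul_comm] at hgap
  have hsum : ∀ n, 2 ≤ n →
      entmaxTerm α (τ n) φ + ((n : ℝ) - 1) * entmaxTerm α (τ n) b = 1 := by
    intro n hn
    have := hτ n hn
    rwa [sum_comp_eq_add_card_sub_one_nsmul _ (hcard n hn) (hvals n hn), nsmul_eq_mul,
      Fintype.card_fin, Nat.cast_sub (by omega), Nat.cast_one] at this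
  have hτb n (hn : 2 ≤ n) : τ n < (α - 1) * b :=
    lt_of_entmaxTerm_add_mul_eq_one hα hgap' (hsum n hn)
  have hτφ n (hn : 2 ≤ n) : τ n < (α - 1) * φ := by linarith [hτb n hn]
  refine ⟨fun n hn i => ?_, fun n hn => ?_, ?_, Real.rpow_lt_one hL.le hgap' (by positivity)⟩
  · rw [entmaxTerm_pos_iff hα]
    rcases hvals n hn i with h | h <;> rw [h]
    exacts [hτφ n hn, hτb n hn]
  · have hn' : (n : ℝ) - 1 ≠ 0 := by
      have : (2 : ℝ) ≤ n := by exact_mod_cast hn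
      linarith
    rw [div_eq_of_eq_mul hn' (c := entmaxTerm α (τ n) b) (by linarith [hsum n hn]),
      entmaxTerm_rpow_of_lt hα (hτφ n hn), entmaxTerm_rpow_of_lt hα (hτb n hn)]
    ring
  · have hlim := ((continuous_entmaxTerm_threshold hα φ).tendsto _).comp
      (tendsto_threshold_of_entmaxTerm_add_mul_eq_one hα hgap' hsum)
    rwa [Function.comp_def, entmaxTerm, ← mul_sub, max_eq_left hL.le] at hlim
end
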